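/- Suppose that Ruf's inequality holds, i.e., there exists d < ∞ such that ∫_{ℝ²}(e^{4π u²} − 1) dx ≤ d for all u ∈ H¹(ℝ²) with ‖∇u‖₂² + ‖u‖₂² ≤ 1. Then for every β ∈ (0, 4π) and every u ∈ H¹(ℝ²) with ‖∇u‖₂ ≤ 1, one has ∫_{ℝ²}(e^{β u²} − 1) dx ≤ (d / (1 − β/(4π))) · ‖u‖₂². -/

import Mathlib

open MeasureTheory Real

/-- Membership in `H¹(ℝ²)`: a differentiable function which, together with its
gradient, belongs to `L²(ℝ²)`. -/
def MemH1 (u : EuclideanSpace ℝ (Fin 2) → ℝ) : Prop :=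
  Differentiable ℝ u ∧ MemLp u 2 (volume : Measure (EuclideanSpace ℝ (Fin 2))) ∧
    MemLp (fun x => fderiv ℝ u x) 2 (volume : Measure (EuclideanSpace ℝ (Fin 2)))

/-!
A dilation `x ↦ r • x` of the plane leaves the Dirichlet energy `∫ ‖∇u‖²` unchanged and
multiplies both `∫ u²` and `∫ (exp (β u²) - 1)` by `r⁻²`. Apply Ruf's inequality to
`√a · u (r •)` with `a = β / 4π`: its Dirichlet energy is at most `a`, and `r² = a ‖u‖₂² / (1 - a)`
makes its squared `L²` norm exactly `1 - a`. This gives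
`∫ (exp (β u²) - 1) ≤ d r² = d a ‖u‖₂² / (1 - a) ≤ d ‖u‖₂² / (1 - a)`.
-/

theorem MeasureTheory.MemLp.comp_smul_addHaar {E F : Type*} [NormedAddCommGroup E]
    [NormedSpace ℝ E] [MeasurableSpace E] [BorelSpace E] [FiniteDimensional ℝ E]
    {μ : Measure E} [μ.IsAddHaarMeasure] [NormedAddCommGroup F] {g : E → F} {p : ENNReal}
    (hg : MemLp g p μ) {r : ℝ} (hr : r ≠ 0) :
    MemLp (fun x => g (r • x)) p μ :=
  MemLp.comp_of_map
    (by rw [Measure.map_addHaar_smul μ hr]; exact hg.smul_measure ENNReal.ofReal_ne_top)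
    (measurable_const_smul r).aemeasurable

theorem fderiv_const_mul_comp_smul {E : Type*} [NormedAddCommGroup E] [NormedSpace ℝ E]
    (u : E → ℝ) (c r : ℝ) (x : E) :
    fderiv ℝ (fun y => c * u (r • y)) x = (c * r) • fderiv ℝ u (r • x) := by
  change fderiv ℝ (c • fun y => u (r • y)) x = _
  rw [fderiv_const_smul_field, Pi.smul_apply, fderiv_comp_smul, smul_smul]

local notation "ℝ²" => EuclideanSpace ℝ (Fin 2)

theorem memH1_zero : MemH1 (fun _ => 0) :=
  ⟨differentiable_const 0, MemLp.zero', by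
    simp only [fderiv_fun_const, Pi.zero_apply]
    exact MemLp.zero' (ε := ℝ² →L[ℝ] ℝ)⟩

theorem MemH1.const_mul_comp_smul {u : ℝ² → ℝ} (hu : MemH1 u) (c : ℝ) {r : ℝ} (hr : r ≠ 0) :
    MemH1 (fun x => c * u (r • x)) := by
  obtain ⟨hdiff, hL2, hgradL2⟩ := hu
  refine ⟨(hdiff.comp (differentiable_id.const_smul r)).const_mul c,
    (hL2.comp_smul_addHaar hr).const_mul c, ?_⟩
  simp_rw [fderiv_const_mul_comp_smul]
  exact (hgradL2.comp_smul_addHaar hr).const_smul (c * r)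

theorem integral_comp_smul_euclideanSpace_two (g : ℝ² → ℝ) (r : ℝ) :
    ∫ x, g (r • x) = (r ^ 2)⁻¹ * ∫ x, g x := by
  rw [Measure.integral_comp_smul, finrank_euclideanSpace_fin, smul_eq_mul,
    abs_of_nonneg (by positivity)]

theorem integral_sq_norm_fderiv_const_mul_comp_smul (u : ℝ² → ℝ) (c : ℝ) {r : ℝ} (hr : r ≠ 0) :
    ∫ x, ‖fderiv ℝ (fun y => c * u (r • y)) x‖ ^ 2 = c ^ 2 * ∫ x, ‖fderiv ℝ u x‖ ^ 2 := by
  simp_rw [fderiv_const_mul_comp_smul, norm_smul, mul_pow, norm_eq_abs, sq_abs]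
  rw [integral_const_mul, integral_comp_smul_euclideanSpace_two (fun y => ‖fderiv ℝ u y‖ ^ 2)]
  field_simp

theorem integral_comp_sq_eq_zero {α : Type*} [MeasurableSpace α] {μ : Measure α} {u : α → ℝ}
    (hu : Integrable (fun x => u x ^ 2) μ) (h : ∫ x, u x ^ 2 ∂μ = 0) {f : ℝ → ℝ} (hf : f 0 = 0) :
    ∫ x, f (u x ^ 2) ∂μ = 0 := by
  have hzero : (fun x => u x ^ 2) =ᵐ[μ] 0 :=
    (integral_eq_zero_iff_of_nonneg (fun x => sq_nonneg _) hu).mp h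
  exact integral_eq_zero_of_ae (hzero.mono fun x hx => by simp only [hx, Pi.zero_apply, hf])

def RufInequality (d : ℝ) : Prop :=
  ∀ u : ℝ² → ℝ, MemH1 u → (∫ x, ‖fderiv ℝ u x‖ ^ 2) + (∫ x, u x ^ 2) ≤ 1 →
    ∫ x, (exp (4 * π * u x ^ 2) - 1) ≤ d

namespace RufInequality

variable {d : ℝ}

theorem nonneg (h : RufInequality d) : 0 ≤ d := by
  simpa using h _ memH1_zero (by simp)

theorem integral_exp_sub_one_le_of_rescale (h : RufInequality d) {u : ℝ² → ℝ} (hu : MemH1 u)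
    {c r : ℝ} (hr : r ≠ 0) (hcr : c ^ 2 * ((∫ x, ‖fderiv ℝ u x‖ ^ 2) + (r ^ 2)⁻¹ * ∫ x, u x ^ 2) ≤ 1) :
    ∫ x, (exp (4 * π * c ^ 2 * u x ^ 2) - 1) ≤ d * r ^ 2 := by
  have hw := h _ (hu.const_mul_comp_smul c hr)
  simp_rw [integral_sq_norm_fderiv_const_mul_comp_smul u c hr, mul_pow, integral_const_mul,
    ← mul_assoc, integral_comp_smul_euclideanSpace_two (fun y => u y ^ 2),
    integral_comp_smul_euclideanSpace_two (fun y => exp (4 * π * c ^ 2 * u y ^ 2) - 1)] at hw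
  have hr2 : 0 < r ^ 2 := by positivity
  rw [mul_comm d, ← inv_mul_le_iff₀ hr2]
  exact hw (by linarith)

theorem integral_exp_sub_one_le_of_integral_sq_pos (h : RufInequality d) {u : ℝ² → ℝ}
    (hu : MemH1 u) (hgrad : ∫ x, ‖fderiv ℝ u x‖ ^ 2 ≤ 1) (hI : 0 < ∫ x, u x ^ 2) {a : ℝ}
    (ha : 0 < a) (ha1 : a < 1) :
    ∫ x, (exp (4 * π * a * u x ^ 2) - 1) ≤ d * a / (1 - a) * ∫ x, u x ^ 2 := by
  generalize hIdef : ∫ x, u x ^ 2 = I at hI ⊢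
  have hr2 : √(a * I / (1 - a)) ^ 2 = a * I / (1 - a) := sq_sqrt (by bound)
  have key := h.integral_exp_sub_one_le_of_rescale hu (c := √a) (r := √(a * I / (1 - a)))
    (sqrt_pos.2 (by bound)).ne' (by
      rw [sq_sqrt ha.le, hr2, hIdef]
      field_simp
      nlinarith)
  rw [sq_sqrt ha.le, hr2] at key
  convert key using 1
  ring

end RufInequality

theorem ruf_implies_improved_adachi_tanaka
    (d : ℝ)
    (hruf : ∀ u : EuclideanSpace ℝ (Fin 2) → ℝ, MemH1 u →
      (∫ x, ‖fderiv ℝ u x‖ ^ 2 ∂volume) + (∫ x, (u x) ^ 2 ∂volume) ≤ 1 →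
      ∫ x, (Real.exp (4 * π * (u x) ^ 2) - 1) ∂volume ≤ d) :
    ∀ β : ℝ, 0 < β → β < 4 * π →
      ∀ u : EuclideanSpace ℝ (Fin 2) → ℝ, MemH1 u →
        (∫ x, ‖fderiv ℝ u x‖ ^ 2 ∂volume) ≤ 1 →
        ∫ x, (Real.exp (β * (u x) ^ 2) - 1) ∂volume ≤
          (d / (1 - β / (4 * π))) * ∫ x, (u x) ^ 2 ∂volume := by
  intro β hβ hβ4π u hu hgrad
  have hd := RufInequality.nonneg hruf
  have ha1 : β / (4 * π) < 1 := (div_lt_one (by positivity)).2 hβ4π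
  rcases (integral_nonneg fun x => sq_nonneg (u x) : 0 ≤ ∫ x, u x ^ 2).eq_or_lt with hI | hI
  · rw [← hI, mul_zero]
    exact (integral_comp_sq_eq_zero hu.2.1.integrable_sq hI.symm
      (f := fun t => exp (β * t) - 1) (by simp)).le
  calc _ = ∫ x, (exp (4 * π * (β / (4 * π)) * u x ^ 2) - 1) := by
        rw [mul_div_cancel₀ β (by positivity)]
    _ ≤ d * (β / (4 * π)) / (1 - β / (4 * π)) * ∫ x, u x ^ 2 :=
        RufInequality.integral_exp_sub_one_le_of_integral_sq_pos hruf hu hgrad hI (by positivity) ha1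
    _ ≤ d / (1 - β / (4 * π)) * ∫ x, u x ^ 2 := by
        gcongr
        exact mul_le_of_le_one_right hd ha1.le
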